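/- arXiv:2212.13383 — 2 statements merged into one kernel-verified Lean document; each statement's English description precedes it below -/
import Mathlib

section
/- (The maximum follows a proportional reversed hazards model.) For the DPRH model, for every y ∈ (a,b), the CDF of Y = max{Y₁,Y₂} equals F(y,y) = ∫_a^{y} ∫_a^{y} f(u,v) dv du = F₀(y)^{θ₁+θ₂}; that is, max{Y₁,Y₂} has a PRH distribution with baseline F₀ and proportionality parameter θ₁+θ₂. -/
open MeasureTheory Set

noncomputable def dprh (a b : ℝ) (F₀ f₀ : ℝ → ℝ) (θ₁ θ₂ θ₁' θ₂' : ℝ) (y₁ y₂ : ℝ) : ℝ :=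
  if a < y₁ ∧ y₁ < y₂ ∧ y₂ < b then
    θ₁' * θ₂ * f₀ y₁ * f₀ y₂ * F₀ y₁ ^ (θ₁' - 1) * F₀ y₂ ^ (θ₁ + θ₂ - θ₁' - 1)
  else if a < y₂ ∧ y₂ < y₁ ∧ y₁ < b then
    θ₁ * θ₂' * f₀ y₁ * f₀ y₂ * F₀ y₁ ^ (θ₁ + θ₂ - θ₂' - 1) * F₀ y₂ ^ (θ₂' - 1)
  else 0

/-! Write `S = θ₁ + θ₂`, `c = S - θ₁'`, `T = F₀ y` and `P_c` for a primitive of `x ↦ x ^ (c - 1)`.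
Splitting the inner integral at `v = u` and substituting `x = F₀ v`, the inner integral equals
`(θ₁ F₀(u)^(S-1) + θ₁' θ₂ F₀(u)^(θ₁'-1) (P_c T - P_c (F₀ u))) f₀ u`. This is `G' (F₀ u) f₀ u` for
`G x = x ^ S + θ₂ x ^ θ₁' (P_c T - P_c x)`, and `G` tends to `0` at `0⁺` and takes the value `T ^ S`
at `T`. All integrands are nonnegative, so every improper integral at `a` converges
automatically and equals the limit of the primitive. -/

open Filter Topology

theorem intervalIntegrable_and_integral_eq_sub_of_nonneg {f φ : ℝ → ℝ} {α β fα fβ : ℝ}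
    (hαβ : α < β) (hderiv : ∀ x ∈ Ioo α β, HasDerivAt f (φ x) x) (hφ : ∀ x ∈ Ioo α β, 0 ≤ φ x)
    (hα : Tendsto f (𝓝[>] α) (𝓝 fα)) (hβ : Tendsto f (𝓝[<] β) (𝓝 fβ)) :
    IntervalIntegrable φ volume α β ∧ ∫ x in α..β, φ x = fβ - fα := by
  set F := Function.update (Function.update f α fα) β fβ with hF
  have hFderiv : ∀ x ∈ Ioo α β, HasDerivAt F (φ x) x := fun x hx =>
    (hderiv x hx).congr_of_eventuallyEq <| by
      filter_upwards [Ioo_mem_nhds hx.1 hx.2] with z hz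
      rw [hF, Function.update_of_ne hz.2.ne, Function.update_of_ne hz.1.ne']
  -- `F` extends `f` continuously to `[α, β]`, which is what the nonnegativity criterion needs.
  have hFcont : ContinuousOn F (Icc α β) := by
    rw [continuousOn_update_iff, continuousOn_update_iff, Icc_sdiff_right, Ico_sdiff_left]
    refine ⟨⟨fun z hz => (hderiv z hz).continuousAt.continuousWithinAt,
      fun _ => hα.mono_left (nhdsWithin_mono _ Ioo_subset_Ioi_self)⟩, fun _ => ?_⟩
    refine (hβ.congr' ?_).mono_left (nhdsWithin_mono _ Ico_subset_Iio_self)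
    filter_upwards [Ioo_mem_nhdsLT hαβ] with z hz using (Function.update_of_ne hz.1.ne' _ _).symm
  have hint : IntervalIntegrable φ volume α β :=
    (intervalIntegrable_iff_integrableOn_Ioc_of_le hαβ.le).2
      (intervalIntegral.integrableOn_deriv_of_nonneg hFcont hFderiv hφ)
  exact ⟨hint, intervalIntegral.integral_eq_sub_of_hasDerivAt_of_tendsto hαβ hderiv hint hα hβ⟩

theorem intervalIntegrable_and_integral_comp_mul_eq_sub {F f G g : ℝ → ℝ} {α β L : ℝ}
    (hαβ : α < β) (hF : ∀ x ∈ Ioc α β, HasDerivAt F (f x) x) (hFpos : ∀ x ∈ Ioc α β, 0 < F x)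
    (hG : ∀ x, 0 < x → HasDerivAt G (g x) x) (hnonneg : ∀ x ∈ Ioo α β, 0 ≤ g (F x) * f x)
    (hα : Tendsto (G ∘ F) (𝓝[>] α) (𝓝 L)) :
    IntervalIntegrable (fun x => g (F x) * f x) volume α β ∧
      ∫ x in α..β, g (F x) * f x = G (F β) - L := by
  have hβ : β ∈ Ioc α β := right_mem_Ioc.2 hαβ
  refine intervalIntegrable_and_integral_eq_sub_of_nonneg hαβ
    (fun x hx => (hG _ (hFpos x (Ioo_subset_Ioc_self hx))).comp x (hF x (Ioo_subset_Ioc_self hx)))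
    hnonneg hα ?_
  exact (((hG _ (hFpos β hβ)).continuousAt.comp (hF β hβ).continuousAt).tendsto).mono_left
    nhdsWithin_le_nhds

-- The logarithmic branch is needed since `θ₁ + θ₂ - θ₁'` may vanish.
noncomputable def rpowPrimitive (c x : ℝ) : ℝ := if c = 0 then Real.log x else x ^ c / c

theorem hasDerivAt_rpowPrimitive (c : ℝ) {x : ℝ} (hx : 0 < x) :
    HasDerivAt (rpowPrimitive c) (x ^ (c - 1)) x := by
  unfold rpowPrimitive
  rcases eq_or_ne c 0 with rfl | hc
  · simpa [Real.rpow_neg_one] using Real.hasDerivAt_log hx.ne'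
  · simp only [hc, if_false]
    simpa [mul_div_cancel_left₀ _ hc] using
      (Real.hasDerivAt_rpow_const (p := c) (Or.inl hx.ne')).div_const c

theorem monotoneOn_rpowPrimitive (c : ℝ) : MonotoneOn (rpowPrimitive c) (Ioi 0) :=
  monotoneOn_of_hasDerivWithinAt_nonneg (convex_Ioi 0)
    (fun _ hx => (hasDerivAt_rpowPrimitive c hx).continuousAt.continuousWithinAt)
    (fun _ hx => (hasDerivAt_rpowPrimitive c (interior_subset hx)).hasDerivWithinAt)
    (fun _ hx => Real.rpow_nonneg (le_of_lt (interior_subset hx)) _)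

theorem tendsto_rpow_nhdsGT_zero {p : ℝ} (hp : 0 < p) :
    Tendsto (fun x : ℝ => x ^ p) (𝓝[>] 0) (𝓝 0) := by
  simpa [Real.zero_rpow hp.ne'] using
    (Real.continuousAt_rpow_const 0 p (Or.inr hp.le)).tendsto.mono_left nhdsWithin_le_nhds

theorem tendsto_rpow_mul_rpowPrimitive {p c : ℝ} (hp : 0 < p) (hpc : 0 < p + c) :
    Tendsto (fun x => x ^ p * rpowPrimitive c x) (𝓝[>] 0) (𝓝 0) := by
  unfold rpowPrimitive
  rcases eq_or_ne c 0 with rfl | hc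
  · simpa [mul_comm] using tendsto_log_mul_rpow_nhdsGT_zero hp
  · simp only [hc, if_false]
    refine ((tendsto_rpow_nhdsGT_zero hpc).div_const c).congr' ?_ |>.trans (by simp)
    filter_upwards [self_mem_nhdsWithin] with x hx
    rw [Real.rpow_add hx]; ring

theorem tendsto_rpowPrimitive_nhdsGT_zero {c : ℝ} (hc : 0 < c) :
    Tendsto (rpowPrimitive c) (𝓝[>] 0) (𝓝 0) := by
  have h : rpowPrimitive c = fun x => x ^ c / c := funext fun _ => if_neg hc.ne'
  simpa [h] using (tendsto_rpow_nhdsGT_zero hc).div_const c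

theorem hasDerivAt_rpow_mul_rpowPrimitive_sub {p q t x : ℝ} (hx : 0 < x) :
    HasDerivAt (fun x => x ^ p * (rpowPrimitive (q - p) t - rpowPrimitive (q - p) x))
      (p * x ^ (p - 1) * (rpowPrimitive (q - p) t - rpowPrimitive (q - p) x) - x ^ (q - 1)) x := by
  have h := (Real.hasDerivAt_rpow_const (p := p) (Or.inl hx.ne')).mul
    ((hasDerivAt_rpowPrimitive (q - p) hx).const_sub (rpowPrimitive (q - p) t))
  refine h.congr_deriv ?_
  rw [mul_neg, ← Real.rpow_add hx]
  ring_nf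

theorem tendsto_rpow_mul_rpowPrimitive_sub {p q t : ℝ} (hp : 0 < p) (hq : 0 < q) :
    Tendsto (fun x => x ^ p * (rpowPrimitive (q - p) t - rpowPrimitive (q - p) x))
      (𝓝[>] 0) (𝓝 0) := by
  have h := ((tendsto_rpow_nhdsGT_zero hp).mul_const (rpowPrimitive (q - p) t)).sub
    (tendsto_rpow_mul_rpowPrimitive hp (by linarith : 0 < p + (q - p)))
  simpa [mul_sub] using h

section dprh

variable {a b : ℝ} {F₀ f₀ : ℝ → ℝ} {θ₁ θ₂ θ₁' θ₂' : ℝ}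

theorem dprh_of_lt {u v : ℝ} (hv : v ∈ Ioo a u) (hu : u < b) :
    dprh a b F₀ f₀ θ₁ θ₂ θ₁' θ₂' u v =
      θ₁ * θ₂' * f₀ u * F₀ u ^ (θ₁ + θ₂ - θ₂' - 1) * (F₀ v ^ (θ₂' - 1) * f₀ v) := by
  rw [dprh, if_neg fun h => h.2.1.not_gt hv.2, if_pos ⟨hv.1, hv.2, hu⟩]
  ring

theorem dprh_of_gt {u v : ℝ} (hu : a < u) (hv : v ∈ Ioo u b) :
    dprh a b F₀ f₀ θ₁ θ₂ θ₁' θ₂' u v =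
      θ₁' * θ₂ * f₀ u * F₀ u ^ (θ₁' - 1) * (F₀ v ^ (θ₁ + θ₂ - θ₁' - 1) * f₀ v) := by
  rw [dprh, if_pos ⟨hu, hv.1, hv.2⟩]
  ring

theorem intervalIntegrable_and_integral_dprh_of_lt {u : ℝ}
    (hderiv : ∀ y ∈ Ioo a b, HasDerivAt F₀ (f₀ y) y) (hf₀pos : ∀ y ∈ Ioo a b, 0 < f₀ y)
    (hF₀pos : ∀ y ∈ Ioo a b, 0 < F₀ y)
    (hFa : Tendsto F₀ (𝓝[>] a) (𝓝[>] 0)) (hθ₂' : 0 < θ₂') (hu : u ∈ Ioo a b) :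
    IntervalIntegrable (dprh a b F₀ f₀ θ₁ θ₂ θ₁' θ₂' u) volume a u ∧
      ∫ v in a..u, dprh a b F₀ f₀ θ₁ θ₂ θ₁' θ₂' u v = θ₁ * F₀ u ^ (θ₁ + θ₂ - 1) * f₀ u := by
  have hIoc : Ioc a u ⊆ Ioo a b := fun x hx => ⟨hx.1, hx.2.trans_lt hu.2⟩
  obtain ⟨hint, hval⟩ := intervalIntegrable_and_integral_comp_mul_eq_sub
    (G := rpowPrimitive θ₂') (g := fun x => x ^ (θ₂' - 1)) hu.1
    (fun x hx => hderiv x (hIoc hx)) (fun x hx => hF₀pos x (hIoc hx))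
    (fun x hx => hasDerivAt_rpowPrimitive _ hx)
    (fun x hx => have hx' := hIoc (Ioo_subset_Ioc_self hx)
      mul_nonneg (Real.rpow_nonneg (hF₀pos x hx').le _) (hf₀pos x hx').le)
    ((tendsto_rpowPrimitive_nhdsGT_zero hθ₂').comp hFa)
  have hEq : EqOn (dprh a b F₀ f₀ θ₁ θ₂ θ₁' θ₂' u)
      (fun v => θ₁ * θ₂' * f₀ u * F₀ u ^ (θ₁ + θ₂ - θ₂' - 1) * (F₀ v ^ (θ₂' - 1) * f₀ v))
      (uIoo a u) := by
    rw [uIoo_of_le hu.1.le]; exact fun v hv => dprh_of_lt hv hu.2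
  refine ⟨(hint.const_mul _).congr_uIoo hEq.symm, ?_⟩
  have hpow : F₀ u ^ (θ₁ + θ₂ - θ₂' - 1) * F₀ u ^ θ₂' = F₀ u ^ (θ₁ + θ₂ - 1) := by
    rw [← Real.rpow_add (hF₀pos u hu)]; ring_nf
  rw [intervalIntegral.integral_congr_uIoo hEq, intervalIntegral.integral_const_mul, hval,
    sub_zero, show rpowPrimitive θ₂' (F₀ u) = F₀ u ^ θ₂' / θ₂' from if_neg hθ₂'.ne']
  field_simp
  linear_combination θ₁ * f₀ u * hpow

theorem intervalIntegrable_and_integral_dprh_of_gt {u y : ℝ}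
    (hderiv : ∀ y ∈ Ioo a b, HasDerivAt F₀ (f₀ y) y) (hf₀pos : ∀ y ∈ Ioo a b, 0 < f₀ y)
    (hF₀pos : ∀ y ∈ Ioo a b, 0 < F₀ y)
    (hu : u ∈ Ioo a y) (hy : y < b) :
    IntervalIntegrable (dprh a b F₀ f₀ θ₁ θ₂ θ₁' θ₂' u) volume u y ∧
      ∫ v in u..y, dprh a b F₀ f₀ θ₁ θ₂ θ₁' θ₂' u v = θ₁' * θ₂ * F₀ u ^ (θ₁' - 1) *
        (rpowPrimitive (θ₁ + θ₂ - θ₁') (F₀ y) - rpowPrimitive (θ₁ + θ₂ - θ₁') (F₀ u)) * f₀ u := by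
  set c := θ₁ + θ₂ - θ₁'
  have hub : u ∈ Ioo a b := ⟨hu.1, hu.2.trans hy⟩
  have hIoc : Ioc u y ⊆ Ioo a b := fun x hx => ⟨hu.1.trans hx.1, hx.2.trans_lt hy⟩
  obtain ⟨hint, hval⟩ := intervalIntegrable_and_integral_comp_mul_eq_sub
    (G := rpowPrimitive c) (g := fun x => x ^ (c - 1)) hu.2
    (fun x hx => hderiv x (hIoc hx)) (fun x hx => hF₀pos x (hIoc hx))
    (fun x hx => hasDerivAt_rpowPrimitive _ hx)
    (fun x hx => have hx' := hIoc (Ioo_subset_Ioc_self hx)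
      mul_nonneg (Real.rpow_nonneg (hF₀pos x hx').le _) (hf₀pos x hx').le)
    (((hasDerivAt_rpowPrimitive c (hF₀pos u hub)).continuousAt.comp
      (hderiv u hub).continuousAt).tendsto.mono_left nhdsWithin_le_nhds)
  have hEq : EqOn (dprh a b F₀ f₀ θ₁ θ₂ θ₁' θ₂' u)
      (fun v => θ₁' * θ₂ * f₀ u * F₀ u ^ (θ₁' - 1) * (F₀ v ^ (c - 1) * f₀ v)) (uIoo u y) := by
    rw [uIoo_of_le hu.2.le]; exact fun v hv => dprh_of_gt hu.1 ⟨hv.1, hv.2.trans hy⟩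
  refine ⟨(hint.const_mul _).congr_uIoo hEq.symm, ?_⟩
  rw [intervalIntegral.integral_congr_uIoo hEq, intervalIntegral.integral_const_mul, hval,
    Function.comp_apply]
  ring

theorem integral_dprh_eq {y u : ℝ}
    (hderiv : ∀ y ∈ Ioo a b, HasDerivAt F₀ (f₀ y) y) (hf₀pos : ∀ y ∈ Ioo a b, 0 < f₀ y)
    (hF₀pos : ∀ y ∈ Ioo a b, 0 < F₀ y)
    (hFa : Tendsto F₀ (𝓝[>] a) (𝓝[>] 0)) (hθ₂' : 0 < θ₂') (hu : u ∈ Ioo a y) (hy : y < b) :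
    ∫ v in a..y, dprh a b F₀ f₀ θ₁ θ₂ θ₁' θ₂' u v =
      (θ₁ * F₀ u ^ (θ₁ + θ₂ - 1) + θ₁' * θ₂ * F₀ u ^ (θ₁' - 1) *
        (rpowPrimitive (θ₁ + θ₂ - θ₁') (F₀ y) - rpowPrimitive (θ₁ + θ₂ - θ₁') (F₀ u))) * f₀ u := by
  obtain ⟨hintL, hL⟩ := intervalIntegrable_and_integral_dprh_of_lt (θ₁ := θ₁) (θ₂ := θ₂)
    (θ₁' := θ₁') hderiv hf₀pos hF₀pos hFa hθ₂' ⟨hu.1, hu.2.trans hy⟩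
  obtain ⟨hintR, hR⟩ := intervalIntegrable_and_integral_dprh_of_gt (θ₁ := θ₁) (θ₂ := θ₂)
    (θ₂' := θ₂') hderiv hf₀pos hF₀pos hu hy
  rw [← intervalIntegral.integral_add_adjacent_intervals hintL hintR, hL, hR]
  ring

end dprh

theorem dprh_max_prh_general
    (a b : ℝ) (F₀ f₀ : ℝ → ℝ)
    (hderiv : ∀ y ∈ Ioo a b, HasDerivAt F₀ (f₀ y) y)
    (hmono : StrictMonoOn F₀ (Ioo a b))
    (hf₀pos : ∀ y ∈ Ioo a b, 0 < f₀ y)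
    (hF₀pos : ∀ y ∈ Ioo a b, 0 < F₀ y)
    (hFa : Filter.Tendsto F₀ (nhdsWithin a (Ioi a)) (nhds 0))
    (θ₁ θ₂ θ₁' θ₂' : ℝ) (hθ₁ : 0 < θ₁) (hθ₂ : 0 < θ₂) (hθ₁' : 0 < θ₁') (hθ₂' : 0 < θ₂')
    :
    ∀ y ∈ Ioo a b,
      (∫ u in a..y, ∫ v in a..y, dprh a b F₀ f₀ θ₁ θ₂ θ₁' θ₂' u v) = F₀ y ^ (θ₁ + θ₂) := by
  intro y hy
  set P := rpowPrimitive (θ₁ + θ₂ - θ₁')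
  set G : ℝ → ℝ := fun x => x ^ (θ₁ + θ₂) + θ₂ * (x ^ θ₁' * (P (F₀ y) - P x)) with hG
  have hsub : Ioc a y ⊆ Ioo a b := fun u hu => ⟨hu.1, hu.2.trans_lt hy.2⟩
  have hFa' : Tendsto F₀ (𝓝[>] a) (𝓝[>] 0) := tendsto_nhdsWithin_iff.2 ⟨hFa, by
    filter_upwards [Ioo_mem_nhdsGT hy.1] with u hu using hF₀pos u (hsub (Ioo_subset_Ioc_self hu))⟩
  have hGderiv : ∀ x, 0 < x → HasDerivAt G
      (θ₁ * x ^ (θ₁ + θ₂ - 1) + θ₁' * θ₂ * x ^ (θ₁' - 1) * (P (F₀ y) - P x)) x := fun x hx =>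
    ((Real.hasDerivAt_rpow_const (Or.inl hx.ne')).add
      ((hasDerivAt_rpow_mul_rpowPrimitive_sub hx).const_mul θ₂)).congr_deriv (by ring)
  have hGlim : Tendsto G (𝓝[>] 0) (𝓝 0) := by
    simpa using (tendsto_rpow_nhdsGT_zero (by positivity)).add
      ((tendsto_rpow_mul_rpowPrimitive_sub hθ₁' (by positivity)).const_mul θ₂)
  have hnonneg : ∀ u ∈ Ioo a y, 0 ≤ (θ₁ * F₀ u ^ (θ₁ + θ₂ - 1) +
      θ₁' * θ₂ * F₀ u ^ (θ₁' - 1) * (P (F₀ y) - P (F₀ u))) * f₀ u := by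
    intro u hu
    have hu' := hsub (Ioo_subset_Ioc_self hu)
    have hPle : 0 ≤ P (F₀ y) - P (F₀ u) := sub_nonneg.2 <| monotoneOn_rpowPrimitive _
      (hF₀pos u hu') (hF₀pos y hy) (hmono.monotoneOn hu' hy hu.2.le)
    have := hF₀pos u hu'
    have := hf₀pos u hu'
    positivity
  rw [intervalIntegral.integral_congr_Ioo_of_le hy.1.le fun u hu =>
    integral_dprh_eq hderiv hf₀pos hF₀pos hFa' hθ₂' hu hy.2]
  simpa [hG] using (intervalIntegrable_and_integral_comp_mul_eq_sub hy.1
    (fun u hu => hderiv u (hsub hu)) (fun u hu => hF₀pos u (hsub hu)) hGderiv hnonneg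
    (hGlim.comp hFa')).2

theorem dprh_max_prh
    (a b : ℝ) (hab : a < b) (F₀ f₀ : ℝ → ℝ)
    (hderiv : ∀ y ∈ Ioo a b, HasDerivAt F₀ (f₀ y) y)
    (hf₀cont : ContinuousOn f₀ (Ioo a b))
    (hmono : StrictMonoOn F₀ (Ioo a b))
    (hf₀pos : ∀ y ∈ Ioo a b, 0 < f₀ y)
    (hF₀pos : ∀ y ∈ Ioo a b, 0 < F₀ y)
    (hF₀lt1 : ∀ y ∈ Ioo a b, F₀ y < 1)
    (hFa : Filter.Tendsto F₀ (nhdsWithin a (Ioi a)) (nhds 0))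
    (hFb : Filter.Tendsto F₀ (nhdsWithin b (Iio b)) (nhds 1))
    (θ₁ θ₂ θ₁' θ₂' : ℝ) (hθ₁ : 0 < θ₁) (hθ₂ : 0 < θ₂) (hθ₁' : 0 < θ₁') (hθ₂' : 0 < θ₂')
    :
    ∀ y ∈ Ioo a b,
      (∫ u in a..y, ∫ v in a..y, dprh a b F₀ f₀ θ₁ θ₂ θ₁' θ₂' u v) = F₀ y ^ (θ₁ + θ₂) :=
  dprh_max_prh_general a b F₀ f₀ hderiv hmono hf₀pos hF₀pos hFa θ₁ θ₂ θ₁' θ₂' hθ₁ hθ₂ hθ₁' hθ₂'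
end

section
/- For the DPRH model, P(Y₁ > Y₂) = ∫_a^b ∫_a^{y₁} f(y₁,y₂) dy₂ dy₁ = θ₁/(θ₁+θ₂) and P(Y₂ > Y₁) = ∫_a^b ∫_a^{y₂} f(y₁,y₂) dy₁ dy₂ = θ₂/(θ₁+θ₂). -/
open MeasureTheory Set

/-! On the region y₂ < y₁ the density is a function of y₁ times
f₀ y₂ F₀(y₂)^(θ₂' - 1) = d/dy₂ (F₀(y₂)^θ₂' / θ₂'), so the inner integral collapses to
θ₁ f₀ y₁ F₀(y₁)^(θ₁ + θ₂ - 1) = θ₁ d/dy₁ (F₀(y₁)^(θ₁ + θ₂) / (θ₁ + θ₂)), and the outer one to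
θ₁ / (θ₁ + θ₂) because F₀ → 0 at a and F₀ → 1 at b. The density is symmetric under exchanging
the coordinates together with (θ₁, θ₁') ↔ (θ₂, θ₂'), which turns the first identity into the
second. -/

open Filter Topology

theorem integral_eq_sub_of_hasDerivAt_of_tendsto_of_nonneg {f f' : ℝ → ℝ} {a b fa fb : ℝ}
    (hab : a < b) (hderiv : ∀ x ∈ Ioo a b, HasDerivAt f (f' x) x)
    (hpos : ∀ x ∈ Ioo a b, 0 ≤ f' x)
    (ha : Tendsto f (𝓝[>] a) (𝓝 fa)) (hb : Tendsto f (𝓝[<] b) (𝓝 fb)) :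
    ∫ y in a..b, f' y = fb - fa := by
  set g : ℝ → ℝ := Function.update (Function.update f a fa) b fb
  have hg : ∀ x ∈ Ioo a b, g =ᶠ[𝓝 x] f := fun x hx => by
    filter_upwards [Ioo_mem_nhds hx.1 hx.2] with y hy
    simp only [g, Function.update_of_ne hy.2.ne, Function.update_of_ne hy.1.ne']
  have hcont : ContinuousOn g (Icc a b) := by
    rw [continuousOn_update_iff, continuousOn_update_iff, Icc_sdiff_right, Ico_sdiff_left]
    refine ⟨⟨fun x hx => (hderiv x hx).continuousAt.continuousWithinAt, fun _ => ?_⟩, fun _ => ?_⟩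
    · exact ha.mono_left (nhdsWithin_mono _ Ioo_subset_Ioi_self)
    · refine (hb.congr' ?_).mono_left (nhdsWithin_mono _ Ico_subset_Iio_self)
      filter_upwards [Ioo_mem_nhdsLT hab] with y hy using
        (Function.update_of_ne hy.1.ne' _ _).symm
  have hint : IntervalIntegrable f' volume a b :=
    (intervalIntegrable_iff_integrableOn_Ioc_of_le hab.le).2 <|
      intervalIntegral.integrableOn_deriv_of_nonneg hcont
        (fun x hx => (hderiv x hx).congr_of_eventuallyEq (hg x hx)) hpos
  exact intervalIntegral.integral_eq_sub_of_hasDerivAt_of_tendsto hab hderiv hint ha hb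

theorem integral_mul_rpow_sub_one_of_hasDerivAt {F f : ℝ → ℝ} {a b L p : ℝ}
    (hab : a < b) (hp : 0 < p) (hderiv : ∀ y ∈ Ioo a b, HasDerivAt F (f y) y)
    (hf : ∀ y ∈ Ioo a b, 0 ≤ f y) (hF : ∀ y ∈ Ioo a b, 0 < F y)
    (ha : Tendsto F (𝓝[>] a) (𝓝 0)) (hb : Tendsto F (𝓝[<] b) (𝓝 L)) :
    ∫ y in a..b, f y * F y ^ (p - 1) = L ^ p / p := by
  have hderiv_pow : ∀ y ∈ Ioo a b,
      HasDerivAt (fun y => F y ^ p / p) (f y * F y ^ (p - 1)) y := fun y hy =>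
    (((hderiv y hy).rpow_const (Or.inl (hF y hy).ne')).div_const p).congr_deriv (by field_simp)
  have hlim : ∀ {l : Filter ℝ} {c : ℝ}, Tendsto F l (𝓝 c) →
      Tendsto (fun y => F y ^ p / p) l (𝓝 (c ^ p / p)) :=
    fun h => (h.rpow_const (Or.inr hp.le)).div_const p
  have h := integral_eq_sub_of_hasDerivAt_of_tendsto_of_nonneg hab hderiv_pow
    (fun y hy => mul_nonneg (hf y hy) (Real.rpow_nonneg (hF y hy).le _)) (hlim ha) (hlim hb)
  rwa [Real.zero_rpow hp.ne', zero_div, sub_zero] at h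

theorem dprh_swap (a b : ℝ) (F₀ f₀ : ℝ → ℝ) (θ₁ θ₂ θ₁' θ₂' y₁ y₂ : ℝ) :
    dprh a b F₀ f₀ θ₁ θ₂ θ₁' θ₂' y₁ y₂ = dprh a b F₀ f₀ θ₂ θ₁ θ₂' θ₁' y₂ y₁ := by
  unfold dprh
  split_ifs with h₁ h₂
  · exact absurd h₁.2.1 h₂.2.1.not_gt
  all_goals ring_nf

theorem integral_dprh_of_lt {a b : ℝ} {F₀ f₀ : ℝ → ℝ} {θ₁ θ₂ θ₁' θ₂' y₁ : ℝ}
    (hderiv : ∀ y ∈ Ioo a b, HasDerivAt F₀ (f₀ y) y) (hf₀pos : ∀ y ∈ Ioo a b, 0 ≤ f₀ y)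
    (hF₀pos : ∀ y ∈ Ioo a b, 0 < F₀ y) (hFa : Tendsto F₀ (𝓝[>] a) (𝓝 0))
    (hy₁ : y₁ ∈ Ioo a b) (hθ₂' : 0 < θ₂') :
    ∫ y₂ in a..y₁, dprh a b F₀ f₀ θ₁ θ₂ θ₁' θ₂' y₁ y₂ =
      θ₁ * (f₀ y₁ * F₀ y₁ ^ (θ₁ + θ₂ - 1)) := by
  have hsub : Ioo a y₁ ⊆ Ioo a b := Ioo_subset_Ioo_right hy₁.2.le
  have hdensity : EqOn (fun y₂ => dprh a b F₀ f₀ θ₁ θ₂ θ₁' θ₂' y₁ y₂)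
      (fun y₂ => θ₁ * θ₂' * f₀ y₁ * F₀ y₁ ^ (θ₁ + θ₂ - θ₂' - 1) * (f₀ y₂ * F₀ y₂ ^ (θ₂' - 1)))
      (Ioo a y₁) := fun y₂ hy₂ => by
    simp only [dprh, if_neg fun h : _ ∧ y₁ < y₂ ∧ _ => h.2.1.not_gt hy₂.2,
      if_pos (⟨hy₂.1, hy₂.2, hy₁.2⟩ : a < y₂ ∧ y₂ < y₁ ∧ y₁ < b)]
    ring
  have hF₀y₁ : Tendsto F₀ (𝓝[<] y₁) (𝓝 (F₀ y₁)) :=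
    (hderiv y₁ hy₁).continuousAt.tendsto.mono_left nhdsWithin_le_nhds
  have hsplit : F₀ y₁ ^ (θ₁ + θ₂ - 1) = F₀ y₁ ^ (θ₁ + θ₂ - θ₂' - 1) * F₀ y₁ ^ θ₂' := by
    rw [← Real.rpow_add (hF₀pos y₁ hy₁)]
    ring_nf
  rw [intervalIntegral.integral_congr_Ioo_of_le hy₁.1.le hdensity,
    intervalIntegral.integral_const_mul,
    integral_mul_rpow_sub_one_of_hasDerivAt hy₁.1 hθ₂' (fun y hy => hderiv y (hsub hy))
      (fun y hy => hf₀pos y (hsub hy)) (fun y hy => hF₀pos y (hsub hy)) hFa hF₀y₁, hsplit]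
  field_simp

theorem integral_integral_dprh_of_lt {a b : ℝ} {F₀ f₀ : ℝ → ℝ} {θ₁ θ₂ θ₁' θ₂' : ℝ}
    (hab : a < b) (hderiv : ∀ y ∈ Ioo a b, HasDerivAt F₀ (f₀ y) y)
    (hf₀pos : ∀ y ∈ Ioo a b, 0 ≤ f₀ y) (hF₀pos : ∀ y ∈ Ioo a b, 0 < F₀ y)
    (hFa : Tendsto F₀ (𝓝[>] a) (𝓝 0)) (hFb : Tendsto F₀ (𝓝[<] b) (𝓝 1))
    (hθ₁₂ : 0 < θ₁ + θ₂) (hθ₂' : 0 < θ₂') :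
    ∫ y₁ in a..b, ∫ y₂ in a..y₁, dprh a b F₀ f₀ θ₁ θ₂ θ₁' θ₂' y₁ y₂ = θ₁ / (θ₁ + θ₂) := by
  rw [intervalIntegral.integral_congr_Ioo_of_le hab.le
      fun y₁ hy₁ => integral_dprh_of_lt hderiv hf₀pos hF₀pos hFa hy₁ hθ₂',
    intervalIntegral.integral_const_mul,
    integral_mul_rpow_sub_one_of_hasDerivAt hab hθ₁₂ hderiv hf₀pos hF₀pos hFa hFb,
    Real.one_rpow, mul_one_div]

theorem dprh_prob_order_general
    (a b : ℝ) (hab : a < b) (F₀ f₀ : ℝ → ℝ)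
    (hderiv : ∀ y ∈ Ioo a b, HasDerivAt F₀ (f₀ y) y)
    (hf₀pos : ∀ y ∈ Ioo a b, 0 < f₀ y)
    (hF₀pos : ∀ y ∈ Ioo a b, 0 < F₀ y)
    (hFa : Filter.Tendsto F₀ (nhdsWithin a (Ioi a)) (nhds 0))
    (hFb : Filter.Tendsto F₀ (nhdsWithin b (Iio b)) (nhds 1))
    (θ₁ θ₂ θ₁' θ₂' : ℝ) (hθ₁ : 0 < θ₁) (hθ₂ : 0 < θ₂) (hθ₁' : 0 < θ₁') (hθ₂' : 0 < θ₂')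
    :
    (∫ y₁ in a..b, ∫ y₂ in a..y₁, dprh a b F₀ f₀ θ₁ θ₂ θ₁' θ₂' y₁ y₂) = θ₁ / (θ₁ + θ₂) ∧
    (∫ y₂ in a..b, ∫ y₁ in a..y₂, dprh a b F₀ f₀ θ₁ θ₂ θ₁' θ₂' y₁ y₂) = θ₂ / (θ₁ + θ₂) := by
  have hf₀nonneg : ∀ y ∈ Ioo a b, 0 ≤ f₀ y := fun y hy => (hf₀pos y hy).le
  have hθ₁₂ : 0 < θ₁ + θ₂ := add_pos hθ₁ hθ₂
  refine ⟨integral_integral_dprh_of_lt hab hderiv hf₀nonneg hF₀pos hFa hFb hθ₁₂ hθ₂', ?_⟩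
  simp only [dprh_swap a b F₀ f₀ θ₁ θ₂ θ₁' θ₂']
  rw [add_comm θ₁] at hθ₁₂ ⊢
  exact integral_integral_dprh_of_lt hab hderiv hf₀nonneg hF₀pos hFa hFb hθ₁₂ hθ₁'

theorem dprh_prob_order
    (a b : ℝ) (hab : a < b) (F₀ f₀ : ℝ → ℝ)
    (hderiv : ∀ y ∈ Ioo a b, HasDerivAt F₀ (f₀ y) y)
    (hf₀cont : ContinuousOn f₀ (Ioo a b))
    (hmono : StrictMonoOn F₀ (Ioo a b))
    (hf₀pos : ∀ y ∈ Ioo a b, 0 < f₀ y)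
    (hF₀pos : ∀ y ∈ Ioo a b, 0 < F₀ y)
    (hF₀lt1 : ∀ y ∈ Ioo a b, F₀ y < 1)
    (hFa : Filter.Tendsto F₀ (nhdsWithin a (Ioi a)) (nhds 0))
    (hFb : Filter.Tendsto F₀ (nhdsWithin b (Iio b)) (nhds 1))
    (θ₁ θ₂ θ₁' θ₂' : ℝ) (hθ₁ : 0 < θ₁) (hθ₂ : 0 < θ₂) (hθ₁' : 0 < θ₁') (hθ₂' : 0 < θ₂')
    :
    (∫ y₁ in a..b, ∫ y₂ in a..y₁, dprh a b F₀ f₀ θ₁ θ₂ θ₁' θ₂' y₁ y₂) = θ₁ / (θ₁ + θ₂) ∧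
    (∫ y₂ in a..b, ∫ y₁ in a..y₂, dprh a b F₀ f₀ θ₁ θ₂ θ₁' θ₂' y₁ y₂) = θ₂ / (θ₁ + θ₂) :=
  dprh_prob_order_general a b hab F₀ f₀ hderiv hf₀pos hF₀pos hFa hFb θ₁ θ₂ θ₁' θ₂' hθ₁ hθ₂ hθ₁' hθ₂'
end
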